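/- arXiv:2304.04979 — 2 statements merged into one kernel-verified Lean document; each statement's English description precedes it below -/
import Mathlib

section
/- If the quorum system has quorum intersection, and two well-behaved processes p and p' each have a quorum of processes that all sent Ready(v) and Ready(v') respectively, and well-behaved processes send Ready for at most one value, then v = v'. -/
theorem ready_consistency {α V : Type*}
    (Q : α → Set (Set α)) (W : Set α)
    (hinter : ∀ p ∈ W, ∀ p' ∈ W, ∀ q ∈ Q p, ∀ q' ∈ Q p',
        (q ∩ q' ∩ W).Nonempty)
    (ready : α → Option V)
    (p p' : α) (hp : p ∈ W) (hp' : p' ∈ W) (v v' : V)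
    (hdel : ∃ q ∈ Q p, ∀ m ∈ q ∩ W, ready m = some v)
    (hdel' : ∃ q ∈ Q p', ∀ m ∈ q ∩ W, ready m = some v') :
    v = v' := by
  obtain ⟨q, hq, hv⟩ := hdel
  obtain ⟨q', hq', hv'⟩ := hdel'
  obtain ⟨m, ⟨⟨hmq, hmq'⟩, hmW⟩⟩ := hinter p hp p' hp' q hq q' hq'
  have h1 := hv m ⟨hmq, hmW⟩
  have h2 := hv' m ⟨hmq', hmW⟩
  rw [h1] at h2
  exact Option.some.inj h2
end

section
/- The quorum system over 𝒫 = {1,2,3,4} with Byzantine set {2} and quorums 𝒬(1) = {{1,3,4}}, 𝒬(3) = {{1,2,3}}, 𝒬(4) = {{2,3,4}} has quorum intersection and is weakly available for {1}, but is not quorum subsuming for the quorum {1,3,4} of process 1 (process 3 has no quorum contained in {1,3,4}, since {1,2,3} ⊄ {1,3,4}); hence 𝒬 is not strongly available for {1}. -/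
def bQ : ℕ → Set (Set ℕ)
  | 1 => {{1, 3, 4}}
  | 3 => {{1, 2, 3}}
  | 4 => {{2, 3, 4}}
  | _ => ∅

def bW : Set ℕ := {1, 3, 4}

lemma bQmem {p : ℕ} {q : Set ℕ} (h : q ∈ bQ p) :
    (p = 1 ∧ q = {1, 3, 4}) ∨ (p = 3 ∧ q = {1, 2, 3}) ∨ (p = 4 ∧ q = {2, 3, 4}) := by
  match p with
  | 1 => exact Or.inl ⟨rfl, h⟩
  | 3 => exact Or.inr (Or.inl ⟨rfl, h⟩)
  | 4 => exact Or.inr (Or.inr ⟨rfl, h⟩)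
  | 0 => exact absurd h (Set.notMem_empty q)
  | 2 => exact absurd h (Set.notMem_empty q)
  | (n+5) => exact absurd h (Set.notMem_empty q)

theorem bracha_example :
    (∀ p ∈ bW, ∀ p' ∈ bW, ∀ q ∈ bQ p, ∀ q' ∈ bQ p', (q ∩ q' ∩ bW).Nonempty) ∧
    (∃ q ∈ bQ 1, q ⊆ bW) ∧
    ¬ (∀ p ∈ ({1, 3, 4} : Set ℕ), ∃ q' ∈ bQ p, q' ⊆ ({1, 3, 4} : Set ℕ)) ∧
    ¬ (∃ q ∈ bQ 1, q ⊆ bW ∧ ∀ p' ∈ q, ∃ q' ∈ bQ p', q' ⊆ q) := by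
  refine ⟨?_, ?_, ?_, ?_⟩
  · intro p _ p' _ q hq q' hq'
    rcases bQmem hq with ⟨_, rfl⟩ | ⟨_, rfl⟩ | ⟨_, rfl⟩ <;>
      rcases bQmem hq' with ⟨_, rfl⟩ | ⟨_, rfl⟩ | ⟨_, rfl⟩ <;>
      exact ⟨3, by simp [bW]⟩
  · exact ⟨{1, 3, 4}, rfl, by simp [bW]⟩
  · intro h
    obtain ⟨q', hq', hsub⟩ := h 3 (by simp)
    rcases bQmem hq' with ⟨h1, _⟩ | ⟨_, rfl⟩ | ⟨h1, _⟩
    · omega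
    · have := hsub (show 2 ∈ ({1,2,3} : Set ℕ) by simp)
      simp at this
    · omega
  · rintro ⟨q, hq, _, hall⟩
    rcases bQmem hq with ⟨_, rfl⟩ | ⟨h1, _⟩ | ⟨h1, _⟩
    · obtain ⟨q', hq', hsub⟩ := hall 3 (by simp)
      rcases bQmem hq' with ⟨h1, _⟩ | ⟨_, rfl⟩ | ⟨h1, _⟩
      · omega
      · have := hsub (show 2 ∈ ({1,2,3} : Set ℕ) by simp)
        simp at this
      · omega
    · omega
    · omega
end
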